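/- arXiv:2106.01350 — 7 statements merged into one kernel-verified Lean document; each statement's English description precedes it below -/
import Mathlib

section
/- A set X ⊆ F is an abductive explanation (AXp) if and only if X is a subset-inclusion-minimal set satisfying X ∩ Y ≠ ∅ for every contrastive explanation (CXp) Y; dually, a set Y ⊆ F is a CXp if and only if Y is a subset-inclusion-minimal set satisfying Y ∩ X ≠ ∅ for every AXp X. -/
/-- `X` is a weak abductive explanation (weak AXp) for classifier `κ` at point `v`:
fixing the features in `X` to their values in `v` forces the prediction `κ v`. -/
def WeakAXp {m : ℕ} {D : Fin m → Type} {K : Type} (κ : (∀ i, D i) → K)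
    (v : ∀ i, D i) (X : Set (Fin m)) : Prop :=
  ∀ x : ∀ i, D i, (∀ i ∈ X, x i = v i) → κ x = κ v

/-- `Y` is a weak contrastive explanation (weak CXp) for `κ` at `v`:
keeping the features outside `Y` at their values in `v`, the prediction can change. -/
def WeakCXp {m : ℕ} {D : Fin m → Type} {K : Type} (κ : (∀ i, D i) → K)
    (v : ∀ i, D i) (Y : Set (Fin m)) : Prop :=
  ∃ x : ∀ i, D i, (∀ j ∉ Y, x j = v j) ∧ κ x ≠ κ v

/-- An AXp is a subset-inclusion-minimal weak AXp. -/
def AXp {m : ℕ} {D : Fin m → Type} {K : Type} (κ : (∀ i, D i) → K)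
    (v : ∀ i, D i) (X : Set (Fin m)) : Prop :=
  WeakAXp κ v X ∧ ∀ X' : Set (Fin m), X' ⊂ X → ¬ WeakAXp κ v X'

/-- A CXp is a subset-inclusion-minimal weak CXp. -/
def CXp {m : ℕ} {D : Fin m → Type} {K : Type} (κ : (∀ i, D i) → K)
    (v : ∀ i, D i) (Y : Set (Fin m)) : Prop :=
  WeakCXp κ v Y ∧ ∀ Y' : Set (Fin m), Y' ⊂ Y → ¬ WeakCXp κ v Y'

section Aux
variable {m : ℕ} {D : Fin m → Type} {K : Type} (κ : (∀ i, D i) → K) (v : ∀ i, D i)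

lemma not_weakAXp_iff (X : Set (Fin m)) : ¬ WeakAXp κ v X ↔ WeakCXp κ v Xᶜ := by
  unfold WeakAXp WeakCXp
  push_neg
  constructor
  · rintro ⟨x, hx, hne⟩; exact ⟨x, fun j hj => hx j (by simpa using hj), hne⟩
  · rintro ⟨x, hx, hne⟩; exact ⟨x, fun i hi => hx i (by simpa using hi), hne⟩

lemma weakAXp_iff_hits (X : Set (Fin m)) :
    WeakAXp κ v X ↔ ∀ Y, WeakCXp κ v Y → (X ∩ Y).Nonempty := by
  constructor
  · rintro hX Y ⟨x, hx, hne⟩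
    by_contra hemp
    exact hne (hX x fun i hi => hx i fun hiY =>
      hemp ⟨i, hi, hiY⟩)
  · intro h
    by_contra hX
    obtain ⟨i, hiX, hiXc⟩ := h Xᶜ ((not_weakAXp_iff κ v X).mp hX)
    exact hiXc hiX

lemma weakCXp_iff_hits (Y : Set (Fin m)) :
    WeakCXp κ v Y ↔ ∀ X, WeakAXp κ v X → (Y ∩ X).Nonempty := by
  constructor
  · rintro ⟨x, hx, hne⟩ X hX
    by_contra hemp
    exact hne (hX x fun i hi => hx i fun hiY => hemp ⟨i, hiY, hi⟩)
  · intro h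
    by_contra hY
    have hA : WeakAXp κ v Yᶜ := by
      by_contra hA
      exact hY (by simpa using (not_weakAXp_iff κ v Yᶜ).mp hA)
    obtain ⟨i, hiY, hiYc⟩ := h Yᶜ hA
    exact hiYc hiY

lemma exists_min_cxp {Y : Set (Fin m)} (h : WeakCXp κ v Y) :
    ∃ Y' ⊆ Y, CXp κ v Y' := by
  obtain ⟨Y', ⟨hsub, hw⟩, hmin⟩ :=
    (wellFounded_lt (α := Set (Fin m))).has_min
      {Z | Z ⊆ Y ∧ WeakCXp κ v Z} ⟨Y, subset_rfl, h⟩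
  exact ⟨Y', hsub, hw, fun Z hZ hwZ =>
    hmin Z ⟨hZ.subset.trans hsub, hwZ⟩ hZ⟩

lemma exists_min_axp {X : Set (Fin m)} (h : WeakAXp κ v X) :
    ∃ X' ⊆ X, AXp κ v X' := by
  obtain ⟨X', ⟨hsub, hw⟩, hmin⟩ :=
    (wellFounded_lt (α := Set (Fin m))).has_min
      {Z | Z ⊆ X ∧ WeakAXp κ v Z} ⟨X, subset_rfl, h⟩
  exact ⟨X', hsub, hw, fun Z hZ hwZ =>
    hmin Z ⟨hZ.subset.trans hsub, hwZ⟩ hZ⟩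

lemma weakAXp_iff_hits_cxp (X : Set (Fin m)) :
    WeakAXp κ v X ↔ ∀ Y, CXp κ v Y → (X ∩ Y).Nonempty := by
  rw [weakAXp_iff_hits]
  constructor
  · exact fun h Y hY => h Y hY.1
  · intro h Y hY
    obtain ⟨Y', hsub, hY'⟩ := exists_min_cxp κ v hY
    exact (h Y' hY').mono (Set.inter_subset_inter_right _ hsub)

lemma weakCXp_iff_hits_axp (Y : Set (Fin m)) :
    WeakCXp κ v Y ↔ ∀ X, AXp κ v X → (Y ∩ X).Nonempty := by
  rw [weakCXp_iff_hits]
  constructor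
  · exact fun h X hX => h X hX.1
  · intro h X hX
    obtain ⟨X', hsub, hX'⟩ := exists_min_axp κ v hX
    exact (h X' hX').mono (Set.inter_subset_inter_right _ hsub)

end Aux

/-- Minimal hitting set duality between AXps and CXps:
`X` is an AXp iff it is a subset-minimal set intersecting every CXp, and
`Y` is a CXp iff it is a subset-minimal set intersecting every AXp. -/
theorem axp_cxp_hitting_set_duality {m : ℕ} {D : Fin m → Type} {K : Type}
    [∀ i, Nonempty (D i)] (κ : (∀ i, D i) → K) (v : ∀ i, D i) :
    (∀ X : Set (Fin m), AXp κ v X ↔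
        ((∀ Y : Set (Fin m), CXp κ v Y → (X ∩ Y).Nonempty) ∧
         ∀ X' : Set (Fin m), X' ⊂ X →
           ¬ (∀ Y : Set (Fin m), CXp κ v Y → (X' ∩ Y).Nonempty))) ∧
    (∀ Y : Set (Fin m), CXp κ v Y ↔
        ((∀ X : Set (Fin m), AXp κ v X → (Y ∩ X).Nonempty) ∧
         ∀ Y' : Set (Fin m), Y' ⊂ Y →
           ¬ (∀ X : Set (Fin m), AXp κ v X → (Y' ∩ X).Nonempty))) := by
  constructor
  · intro X
    unfold AXp
    simp_rw [weakAXp_iff_hits_cxp κ v]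
  · intro Y
    unfold CXp
    simp_rw [weakCXp_iff_hits_axp κ v]
end

section
/- Let f be a monotone predicate on finite subsets of {1,…,m} and let A be a finite set with f(A). Define B as the result of iterating over the elements a of A (in any fixed order), starting from B := A, and replacing B by B ∖ {a} whenever f(B ∖ {a}) holds (leaving B unchanged otherwise). Then B ⊆ A, f(B) holds, and B is subset-inclusion-minimal among the sets satisfying f. (This establishes correctness of the deletion-based algorithms for extracting one AXp and one CXp from a seed.) -/
/-! Each element `a` of the seed is examined once. If `f` survived the removal of `a`, then `a`
is gone; if not, it stays, and by monotonicity `f` keeps failing on the removal of `a` from every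
later, smaller set. Hence no single element can be removed from the final set, and since every
proper subset lies below the removal of one element, no proper subset satisfies `f`. -/

namespace Finset

variable {α : Type*} [DecidableEq α]

theorem not_of_ssubset_of_forall_not_erase {f : Finset α → Prop} (hf : Monotone f)
    {B C : Finset α} (hB : ∀ x ∈ B, ¬ f (B.erase x)) (hC : C ⊂ B) : ¬ f C := by
  obtain ⟨x, hx, hCx⟩ := ssubset_iff_exists_subset_erase.1 hC
  exact fun hfC => hB x hx (hf hCx hfC)

variable (f : Finset α → Prop) [DecidablePred f]

def deletionStep (B : Finset α) (a : α) : Finset α :=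
  if f (B.erase a) then B.erase a else B

def deletionExtract (l : List α) (B : Finset α) : Finset α :=
  l.foldl (deletionStep f) B

variable {f}

theorem deletionStep_subset (B : Finset α) (a : α) : deletionStep f B a ⊆ B := by
  unfold deletionStep
  split_ifs
  · exact erase_subset a B
  · exact Subset.rfl

theorem deletionStep_pred {B : Finset α} (hB : f B) (a : α) : f (deletionStep f B a) := by
  unfold deletionStep
  split_ifs with h
  · exact h
  · exact hB

theorem deletionStep_not_erase (hf : Monotone f) {B : Finset α} {a : α} {l : List α}
    (hB : ∀ x ∈ B, x ∉ a :: l → ¬ f (B.erase x)) :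
    ∀ x ∈ deletionStep f B a, x ∉ l → ¬ f ((deletionStep f B a).erase x) := by
  intro x hx hxl
  by_cases hxa : x = a
  · subst hxa
    unfold deletionStep at hx ⊢
    split_ifs at hx ⊢ with h
    · exact absurd hx (notMem_erase x B)
    · exact h
  · refine fun hfx => hB x (deletionStep_subset B a hx) ?_ ?_
    · simp [hxa, hxl]
    · exact hf (erase_subset_erase x (deletionStep_subset B a)) hfx

theorem deletionExtract_subset (l : List α) (B : Finset α) : deletionExtract f l B ⊆ B := by
  induction l generalizing B with
  | nil => exact Subset.rfl
  | cons a l ih => exact (ih _).trans (deletionStep_subset B a)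

theorem deletionExtract_pred (l : List α) {B : Finset α} (hB : f B) :
    f (deletionExtract f l B) := by
  induction l generalizing B with
  | nil => exact hB
  | cons a l ih => exact ih (deletionStep_pred hB a)

theorem deletionExtract_not_erase (hf : Monotone f) (l : List α) {B : Finset α}
    (hB : ∀ x ∈ B, x ∉ l → ¬ f (B.erase x)) :
    ∀ x ∈ deletionExtract f l B, ¬ f ((deletionExtract f l B).erase x) := by
  induction l generalizing B with
  | nil => exact fun x hx => hB x hx List.not_mem_nil
  | cons a l ih => exact ih (deletionStep_not_erase hf hB)

end Finset

theorem deletion_based_extraction_correct_general {m : ℕ} (f : Finset (Fin m) → Prop)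
    [DecidablePred f] (hmono : ∀ S T : Finset (Fin m), S ⊆ T → f S → f T)
    (A : Finset (Fin m)) (hA : f A)
    (l : List (Fin m)) (hmem : ∀ a : Fin m, a ∈ l ↔ a ∈ A) :
    let B := l.foldl (fun B a => if f (B.erase a) then B.erase a else B) A
    B ⊆ A ∧ f B ∧ ∀ C : Finset (Fin m), C ⊂ B → ¬ f C := by
  have hf : Monotone f := fun S T => hmono S T
  show Finset.deletionExtract f l A ⊆ A ∧ f (Finset.deletionExtract f l A) ∧
    ∀ C, C ⊂ Finset.deletionExtract f l A → ¬ f C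
  have hlocal := Finset.deletionExtract_not_erase hf l (B := A)
    fun x hx hxl => absurd ((hmem x).2 hx) hxl
  exact ⟨Finset.deletionExtract_subset l A, Finset.deletionExtract_pred l hA,
    fun _ => Finset.not_of_ssubset_of_forall_not_erase hf hlocal⟩

/-- Correctness of the deletion-based algorithm for extracting one minimal set
satisfying a monotone predicate `f` from a seed `A` with `f A`: iterating over
the elements of `A` (in any fixed order, given by a duplicate-free list `l`
enumerating `A`), and removing an element whenever `f` still holds on the
result, yields a subset `B ⊆ A` with `f B` that is subset-inclusion-minimal
among the sets satisfying `f`. -/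
theorem deletion_based_extraction_correct {m : ℕ} (f : Finset (Fin m) → Prop)
    [DecidablePred f] (hmono : ∀ S T : Finset (Fin m), S ⊆ T → f S → f T)
    (A : Finset (Fin m)) (hA : f A)
    (l : List (Fin m)) (hnd : l.Nodup) (hmem : ∀ a : Fin m, a ∈ l ↔ a ∈ A) :
    let B := l.foldl (fun B a => if f (B.erase a) then B.erase a else B) A
    B ⊆ A ∧ f B ∧ ∀ C : Finset (Fin m), C ⊂ B → ¬ f C :=
  deletion_based_extraction_correct_general f hmono A hA l hmem
end

section
/- For a well-formed decision tree T with classifier κ_T and instance v with κ_T(v) = c, the number of contrastive explanations (CXps) of κ_T at v is at most the number of leaves of T whose class label is different from c. -/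
/-- A (multi-valued, univariate) decision tree over `m` features with domains
`D i` and classes `K`: a leaf carries a class, and an internal node carries a
tested feature `i` together with a finite nonempty family of children (indexed
by `Fin (n+1)`), each child labeled with a subset of `D i`. -/
inductive DTree (m : ℕ) (D : Fin m → Type) (K : Type) : Type where
  | leaf : K → DTree m D K
  | node : (i : Fin m) → (n : ℕ) → (Fin (n + 1) → Set (D i)) →
      (Fin (n + 1) → DTree m D K) → DTree m D K

namespace DTree

variable {m : ℕ} {D : Fin m → Type} {K : Type}

/-- `PathTo T p c` holds when `p` is the list of edges (each recording the
tested feature and the edge's label) of a root-to-leaf path of `T` whose leaf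
carries class `c`. -/
inductive PathTo : DTree m D K → List (Σ i : Fin m, Set (D i)) → K → Prop where
  | leaf (c : K) : PathTo (.leaf c) [] c
  | node {i : Fin m} {n : ℕ} {lab : Fin (n + 1) → Set (D i)}
      {ch : Fin (n + 1) → DTree m D K} (k : Fin (n + 1))
      {p : List (Σ i : Fin m, Set (D i))} {c : K} :
      PathTo (ch k) p c → PathTo (.node i n lab ch) (⟨i, lab k⟩ :: p) c

/-- A path `p` is consistent with a point `x` of feature space if `x i ∈ E`
for every edge of `p` testing feature `i` with label `E`. -/
def Consistent (x : ∀ i, D i) (p : List (Σ i : Fin m, Set (D i))) : Prop :=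
  ∀ e ∈ p, x e.1 ∈ e.2

/-- At every internal node, the children's labels are pairwise disjoint and
their union is the whole domain of the tested feature. -/
inductive Partitioned : DTree m D K → Prop where
  | leaf (c : K) : Partitioned (.leaf c)
  | node {i : Fin m} {n : ℕ} {lab : Fin (n + 1) → Set (D i)}
      {ch : Fin (n + 1) → DTree m D K} :
      (∀ k k' : Fin (n + 1), k ≠ k' → lab k ∩ lab k' = ∅) →
      (∀ d : D i, ∃ k : Fin (n + 1), d ∈ lab k) →
      (∀ k : Fin (n + 1), Partitioned (ch k)) →
      Partitioned (.node i n lab ch)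

/-- No root-to-leaf path of `T` is inconsistent: along every root-to-leaf
path, for every feature `i`, the intersection of the labels of the edges
testing `i` on that path is nonempty. -/
def NoInconsistentPath (T : DTree m D K) : Prop :=
  ∀ (p : List (Σ i : Fin m, Set (D i))) (c : K), T.PathTo p c →
    ∀ i : Fin m, ∃ d : D i,
      ∀ E : Set (D i), (⟨i, E⟩ : Σ j : Fin m, Set (D j)) ∈ p → d ∈ E

/-- A decision tree is well-formed if every node's children's labels partition
the tested feature's domain and no root-to-leaf path is inconsistent. -/
def WellFormed (T : DTree m D K) : Prop := T.Partitioned ∧ T.NoInconsistentPath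

/-- `Free v p` is the set of features `i` such that some edge of `p` tests `i`
with a label `E` with `v i ∉ E`. -/
def Free (v : ∀ i, D i) (p : List (Σ i : Fin m, Set (D i))) : Set (Fin m) :=
  {i | ∃ E : Set (D i), (⟨i, E⟩ : Σ j : Fin m, Set (D j)) ∈ p ∧ v i ∉ E}

end DTree

namespace DTree
/-- The number of leaves of a decision tree whose class label differs from `c`. -/
def countLeavesNe {m : ℕ} {D : Fin m → Type} {K : Type} [DecidableEq K]
    (c : K) : DTree m D K → ℕ
  | .leaf c' => if c' = c then 0 else 1
  | .node _ n _ ch => ∑ k : Fin (n + 1), countLeavesNe c (ch k)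
end DTree

/-!
Every CXp `Y` is the set `Free v p` of some root-to-leaf path `p` ending in a leaf of class
`≠ κ v`, so there are at most as many CXps as such leaves. Indeed, a point `x` witnessing `Y`
follows some path `p` to a leaf of class `κ x ≠ κ v`; since `x` agrees with `v` off `Y`, every
feature on which `v` leaves `p` lies in `Y`, i.e. `Free v p ⊆ Y`. Conversely `Free v p` is a weak
CXp: well-formedness provides a point on `p`, and changing `v` to it on `Free v p` only yields a
point following `p`. Minimality of `Y` forces `Y = Free v p`.
-/

theorem Set.ncard_le_length_of_subset {α : Type*} {s : Set α} {l : List α}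
    (h : ∀ a ∈ s, a ∈ l) : s.ncard ≤ l.length := by
  classical
  calc s.ncard ≤ (l.toFinset : Set α).ncard :=
        Set.ncard_le_ncard (fun a ha => by simpa using h a ha) (Finset.finite_toSet _)
    _ = l.toFinset.card := Set.ncard_coe_finset _
    _ ≤ l.length := l.toFinset_card_le

namespace DTree

variable {m : ℕ} {D : Fin m → Type} {K : Type}

def pathsNe [DecidableEq K] (c : K) : DTree m D K → List (List (Σ i : Fin m, Set (D i)))
  | .leaf c' => if c' = c then [] else [[]]
  | .node i n lab ch =>
      (List.finRange (n + 1)).flatMap fun k => (pathsNe c (ch k)).map (⟨i, lab k⟩ :: ·)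

theorem length_pathsNe [DecidableEq K] (c : K) (T : DTree m D K) :
    (T.pathsNe c).length = T.countLeavesNe c := by
  induction T with
  | leaf c' => by_cases h : c' = c <;> simp [pathsNe, countLeavesNe, h]
  | node i n lab ch ih =>
    simp [pathsNe, countLeavesNe, ih, Fin.sum_univ_def]

theorem PathTo.mem_pathsNe [DecidableEq K] {c c' : K} {T : DTree m D K}
    {p : List (Σ i : Fin m, Set (D i))} (hp : T.PathTo p c') (hc : c' ≠ c) :
    p ∈ T.pathsNe c := by
  induction hp with
  | leaf => simp [pathsNe, hc]
  | node k _ ih =>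
    simp only [pathsNe, List.mem_flatMap, List.mem_map]
    exact ⟨k, List.mem_finRange k, _, ih hc, rfl⟩

theorem Partitioned.exists_pathTo_consistent {T : DTree m D K} (hT : T.Partitioned)
    (x : ∀ i, D i) : ∃ p c, T.PathTo p c ∧ Consistent x p := by
  induction hT with
  | leaf c => exact ⟨[], c, .leaf c, by simp [Consistent]⟩
  | @node i n lab ch _ hcov _ ih =>
    obtain ⟨k, hk⟩ := hcov (x i)
    obtain ⟨p, c, hp, hcons⟩ := ih k
    refine ⟨⟨i, lab k⟩ :: p, c, .node k hp, ?_⟩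
    rintro e (_ | ⟨_, he⟩)
    exacts [hk, hcons e he]

theorem free_subset_of_consistent {v x : ∀ i, D i} {Y : Set (Fin m)}
    {p : List (Σ i : Fin m, Set (D i))} (hx : ∀ j ∉ Y, x j = v j) (hcons : Consistent x p) :
    Free v p ⊆ Y := by
  rintro i ⟨E, hE, hvE⟩
  by_contra hiY
  exact hvE (hx i hiY ▸ hcons ⟨i, E⟩ hE)

theorem exists_consistent_eq_off_free {T : DTree m D K} (hT : T.NoInconsistentPath)
    {p : List (Σ i : Fin m, Set (D i))} {c : K} (hp : T.PathTo p c) (v : ∀ i, D i) :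
    ∃ x : ∀ i, D i, (∀ j ∉ Free v p, x j = v j) ∧ Consistent x p := by
  classical
  choose d hd using hT p c hp
  refine ⟨fun i => if i ∈ Free v p then d i else v i, fun j hj => if_neg hj, ?_⟩
  rintro ⟨i, E⟩ hE
  by_cases hi : i ∈ Free v p
  · simpa [hi] using hd i E hE
  · simpa [hi] using not_not.mp fun hv => hi ⟨E, hE, hv⟩

section Classifier

variable {T : DTree m D K} {κ : (∀ i, D i) → K}
  (hκ : ∀ x p c, T.PathTo p c → Consistent x p → κ x = c)
include hκ

theorem weakCXp_free (hT : T.NoInconsistentPath) {p : List (Σ i : Fin m, Set (D i))} {c : K}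
    (hp : T.PathTo p c) {v : ∀ i, D i} (hc : c ≠ κ v) : WeakCXp κ v (Free v p) := by
  obtain ⟨x, hxv, hcons⟩ := exists_consistent_eq_off_free hT hp v
  exact ⟨x, hxv, hκ x p c hp hcons ▸ hc⟩

theorem exists_pathTo_free_eq_of_cxp (hT : T.WellFormed) {v : ∀ i, D i} {Y : Set (Fin m)}
    (hY : CXp κ v Y) : ∃ p c, T.PathTo p c ∧ c ≠ κ v ∧ Free v p = Y := by
  obtain ⟨⟨x, hxv, hne⟩, hmin⟩ := hY
  obtain ⟨p, c, hp, hcons⟩ := hT.1.exists_pathTo_consistent x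
  have hc : c ≠ κ v := hκ x p c hp hcons ▸ hne
  have hsub : Free v p ⊆ Y := free_subset_of_consistent hxv hcons
  refine ⟨p, c, hp, hc, hsub.eq_of_not_ssubset fun hss => ?_⟩
  exact hmin _ hss (weakCXp_free hκ hT.2 hp hc)

end Classifier

end DTree

theorem card_cxp_le_countLeavesNe_general {m : ℕ} {D : Fin m → Type} {K : Type}
    [DecidableEq K]
    (T : DTree m D K) (hT : T.WellFormed) (κ : (∀ i, D i) → K)
    (hκ : ∀ (x : ∀ i, D i) (p : List (Σ i : Fin m, Set (D i))) (c : K),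
      T.PathTo p c → DTree.Consistent x p → κ x = c)
    (v : ∀ i, D i) :
    {Y : Set (Fin m) | CXp κ v Y}.ncard ≤ T.countLeavesNe (κ v) := by
  rw [← T.length_pathsNe, ← List.length_map (DTree.Free v)]
  refine Set.ncard_le_length_of_subset fun Y hY => ?_
  obtain ⟨p, c, hp, hc, rfl⟩ := DTree.exists_pathTo_free_eq_of_cxp hκ hT hY
  exact List.mem_map_of_mem (hp.mem_pathsNe hc)

/-- For a well-formed decision tree `T` with classifier `κ` and instance `v`
(with prediction `κ v`), the number of CXps of `κ` at `v` is at most the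
number of leaves of `T` whose class label is different from `κ v`. -/
theorem card_cxp_le_countLeavesNe {m : ℕ} {D : Fin m → Type} {K : Type}
    [∀ i, Nonempty (D i)] [DecidableEq K]
    (T : DTree m D K) (hT : T.WellFormed) (κ : (∀ i, D i) → K)
    (hκ : ∀ (x : ∀ i, D i) (p : List (Σ i : Fin m, Set (D i))) (c : K),
      T.PathTo p c → DTree.Consistent x p → κ x = c)
    (v : ∀ i, D i) :
    {Y : Set (Fin m) | CXp κ v Y}.ncard ≤ T.countLeavesNe (κ v) :=
  card_cxp_le_countLeavesNe_general T hT κ hκ v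
end

section
/- For a well-formed decision tree T with classifier κ_T and instance v with κ_T(v) = c, the set of contrastive explanations (CXps) of κ_T at v equals the set of subset-inclusion-minimal elements of the family { Free(P) : P a root-to-leaf path of T whose leaf class is different from c }. -/
lemma DTree.exists_consistent_path {m : ℕ} {D : Fin m → Type} {K : Type}
    (T : DTree m D K) : T.Partitioned → ∀ x : ∀ i, D i,
    ∃ (p : List (Σ i : Fin m, Set (D i))) (c : K),
      T.PathTo p c ∧ DTree.Consistent x p := by
  induction T with
  | leaf c =>
    intro _ x
    exact ⟨[], c, .leaf c, by intro e he; cases he⟩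
  | node i n lab ch ih =>
    intro hP x
    cases hP with
    | node hdisj htot hch =>
      obtain ⟨k, hk⟩ := htot (x i)
      obtain ⟨p, c, hp, hc⟩ := ih k (hch k) x
      refine ⟨⟨i, lab k⟩ :: p, c, .node k hp, ?_⟩
      intro e he
      cases he with
      | head => exact hk
      | tail _ h => exact hc e h

lemma free_weakCXp {m : ℕ} {D : Fin m → Type} {K : Type}
    (T : DTree m D K) (hT : T.NoInconsistentPath) (κ : (∀ i, D i) → K)
    (hκ : ∀ (x : ∀ i, D i) (p : List (Σ i : Fin m, Set (D i))) (c : K),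
      T.PathTo p c → DTree.Consistent x p → κ x = c)
    (v : ∀ i, D i) {p : List (Σ i : Fin m, Set (D i))} {c' : K}
    (hp : T.PathTo p c') (hne : c' ≠ κ v) :
    WeakCXp κ v (DTree.Free v p) := by
  classical
  have hd : ∀ i : Fin m, ∃ d : D i,
      ∀ E : Set (D i), (⟨i, E⟩ : Σ j : Fin m, Set (D j)) ∈ p → d ∈ E :=
    hT p c' hp
  set x : ∀ i, D i := fun i =>
    if i ∈ DTree.Free v p then (hd i).choose else v i with hx
  have hcons : DTree.Consistent x p := by
    intro e he
    obtain ⟨i, E⟩ := e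
    by_cases hi : i ∈ DTree.Free v p
    · simp only [hx, if_pos hi]
      exact (hd i).choose_spec E he
    · simp only [hx, if_neg hi]
      by_contra hvE
      exact hi ⟨E, he, hvE⟩
  refine ⟨x, ?_, ?_⟩
  · intro j hj
    simp [hx, hj]
  · rw [hκ x p c' hp hcons]
    exact hne

/-- For a well-formed decision tree `T` with classifier `κ` and instance `v`
(with prediction `κ v`), the set of CXps of `κ` at `v` equals the set of
subset-inclusion-minimal elements of the family of all `Free v p`, for `p` a
root-to-leaf path of `T` whose leaf class differs from `κ v`. -/
theorem cxp_eq_minimal_free {m : ℕ} {D : Fin m → Type} {K : Type}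
    [∀ i, Nonempty (D i)]
    (T : DTree m D K) (hT : T.WellFormed) (κ : (∀ i, D i) → K)
    (hκ : ∀ (x : ∀ i, D i) (p : List (Σ i : Fin m, Set (D i))) (c : K),
      T.PathTo p c → DTree.Consistent x p → κ x = c)
    (v : ∀ i, D i) :
    {Y : Set (Fin m) | CXp κ v Y} =
      {Y : Set (Fin m) |
        (∃ (p : List (Σ i : Fin m, Set (D i))) (c' : K),
            T.PathTo p c' ∧ c' ≠ κ v ∧ Y = DTree.Free v p) ∧
        ∀ Z : Set (Fin m),
          (∃ (p : List (Σ i : Fin m, Set (D i))) (c' : K),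
              T.PathTo p c' ∧ c' ≠ κ v ∧ Z = DTree.Free v p) →
          Z ⊆ Y → Z = Y} := by
  -- every member of the Free-family is a weak CXp
  have hB_weak : ∀ Y : Set (Fin m),
      (∃ (p : List (Σ i : Fin m, Set (D i))) (c' : K),
          T.PathTo p c' ∧ c' ≠ κ v ∧ Y = DTree.Free v p) → WeakCXp κ v Y := by
    rintro Y ⟨p, c', hp, hne, rfl⟩
    exact free_weakCXp T hT.2 κ hκ v hp hne
  -- every weak CXp contains a member of the Free-family
  have hA_cover : ∀ Y : Set (Fin m), WeakCXp κ v Y →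
      ∃ Z : Set (Fin m),
        (∃ (p : List (Σ i : Fin m, Set (D i))) (c' : K),
            T.PathTo p c' ∧ c' ≠ κ v ∧ Z = DTree.Free v p) ∧ Z ⊆ Y := by
    rintro Y ⟨x, hxv, hxne⟩
    obtain ⟨p, c', hp, hcons⟩ := DTree.exists_consistent_path T hT.1 x
    have hc' : c' = κ x := (hκ x p c' hp hcons).symm
    refine ⟨DTree.Free v p, ⟨p, c', hp, hc' ▸ hxne, rfl⟩, ?_⟩
    rintro i ⟨E, hE, hvE⟩
    by_contra hiY
    exact hvE (hxv i hiY ▸ hcons ⟨i, E⟩ hE)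
  ext Y
  simp only [Set.mem_setOf_eq]
  constructor
  · rintro ⟨hw, hmin⟩
    obtain ⟨Z, hZB, hZY⟩ := hA_cover Y hw
    have hZeq : Z = Y := by
      by_contra hne
      exact hmin Z ⟨hZY, fun h => hne (le_antisymm hZY h)⟩ (hB_weak Z hZB)
    refine ⟨hZeq ▸ hZB, ?_⟩
    intro Z' hZ'B hZ'Y
    by_contra hne
    exact hmin Z' ⟨hZ'Y, fun h => hne (le_antisymm hZ'Y h)⟩ (hB_weak Z' hZ'B)
  · rintro ⟨hYB, hmin⟩
    refine ⟨hB_weak Y hYB, ?_⟩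
    rintro Y' hY'Y hY'w
    obtain ⟨Z, hZB, hZY'⟩ := hA_cover Y' hY'w
    have : Z = Y := hmin Z hZB (hZY'.trans hY'Y.subset)
    exact hY'Y.not_subset (this ▸ hZY')
end

section
/- Let T be a well-formed decision tree with classifier κ_T, and let v ∈ 𝔽 with κ_T(v) = c. For every root-to-leaf path P of T whose leaf class c' is different from c, there exists x ∈ 𝔽 such that x_j = v_j for all j ∉ Free(P), the path P is consistent with x, and κ_T(x) = c' ≠ c. In particular, Free(P) is a weak CXp. -/
/-- For a well-formed decision tree `T` with classifier `κ` and instance `v`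
(with prediction `κ v`), every root-to-leaf path `p` whose leaf class `c'`
differs from `κ v` yields a point `x` agreeing with `v` outside `Free v p`,
consistent with `p`, and classified as `c'`; in particular `Free v p` is a
weak CXp. -/
theorem free_of_path_is_weakCXp {m : ℕ} {D : Fin m → Type} {K : Type}
    [∀ i, Nonempty (D i)]
    (T : DTree m D K) (hT : T.WellFormed) (κ : (∀ i, D i) → K)
    (hκ : ∀ (x : ∀ i, D i) (p : List (Σ i : Fin m, Set (D i))) (c : K),
      T.PathTo p c → DTree.Consistent x p → κ x = c)
    (v : ∀ i, D i)
    (p : List (Σ i : Fin m, Set (D i))) (c' : K)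
    (hp : T.PathTo p c') (hne : c' ≠ κ v) :
    (∃ x : ∀ i, D i, (∀ j ∉ DTree.Free v p, x j = v j) ∧
        DTree.Consistent x p ∧ κ x = c') ∧
    WeakCXp κ v (DTree.Free v p) := by
  classical
  have hni := hT.2 p c' hp
  choose d hd using hni
  set x : ∀ i, D i := fun i => if i ∈ DTree.Free v p then d i else v i with hx
  have hagree : ∀ j ∉ DTree.Free v p, x j = v j := by
    intro j hj; simp [hx, hj]
  have hcons : DTree.Consistent x p := by
    intro e he
    by_cases hf : e.1 ∈ DTree.Free v p
    · have : x e.1 = d e.1 := by simp [hx, hf]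
      rw [this]
      exact hd e.1 e.2 he
    · have : x e.1 = v e.1 := by simp [hx, hf]
      rw [this]
      by_contra hv
      exact hf ⟨e.2, he, hv⟩
  have hcx : κ x = c' := hκ x p c' hp hcons
  exact ⟨⟨x, hagree, hcons, hcx⟩, ⟨x, hagree, by rw [hcx]; exact hne⟩⟩
end

section
/- Let T be a well-formed decision tree with classifier κ_T, and let v ∈ 𝔽 with κ_T(v) = c. A set X ⊆ F is an abductive explanation (AXp) of κ_T at v if and only if X is a subset-inclusion-minimal set satisfying X ∩ Free(P) ≠ ∅ for every root-to-leaf path P of T whose leaf class is different from c. -/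
/-! A set `X` is a weak AXp exactly when it meets `Free v P` for every path `P` ending in
another class. If `X` misses `Free v P`, well-formedness lets us move `v` on `Free v P` alone
to a point following `P`; it agrees with `v` on `X` yet gets the other class. Conversely a point
agreeing with `v` on `X` follows some path `P`, and a feature of `X ∩ Free v P` would be one
where that point, equal to `v`, violates `P`. Minimality then transfers verbatim. -/

namespace DTree

variable {m : ℕ} {D : Fin m → Type} {K : Type}

def HitsFree (T : DTree m D K) (v : ∀ i, D i) (c : K) (X : Set (Fin m)) : Prop :=
  ∀ (p : List (Σ i : Fin m, Set (D i))) (c' : K), T.PathTo p c' → c' ≠ c →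
    (X ∩ Free v p).Nonempty

theorem NoInconsistentPath.exists_consistent_eq_of_notMem_free {T : DTree m D K}
    (hT : T.NoInconsistentPath) {p : List (Σ i : Fin m, Set (D i))} {c : K}
    (hp : T.PathTo p c) (v : ∀ i, D i) :
    ∃ x, Consistent x p ∧ ∀ i ∉ Free v p, x i = v i := by
  classical
  choose d hd using hT p c hp
  refine ⟨fun i => if i ∈ Free v p then d i else v i, ?_, fun i hi => if_neg hi⟩
  rintro ⟨i, E⟩ he
  dsimp only
  split_ifs with hi
  · exact hd i E he
  · by_contra hvE
    exact hi ⟨E, he, hvE⟩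

theorem inter_free_eq_empty_of_consistent {x v : ∀ i, D i}
    {p : List (Σ i : Fin m, Set (D i))} {X : Set (Fin m)} (hx : Consistent x p)
    (hxv : ∀ i ∈ X, x i = v i) : X ∩ Free v p = ∅ := by
  refine Set.eq_empty_iff_forall_notMem.mpr ?_
  rintro i ⟨hiX, E, he, hvE⟩
  exact hvE (hxv i hiX ▸ hx _ he)

theorem weakAXp_iff_hitsFree {T : DTree m D K} (hT : T.WellFormed) {κ : (∀ i, D i) → K}
    (hκ : ∀ x p c, T.PathTo p c → Consistent x p → κ x = c) (v : ∀ i, D i)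
    (X : Set (Fin m)) : WeakAXp κ v X ↔ T.HitsFree v (κ v) X := by
  constructor
  · intro hX p c hp hc
    obtain ⟨x, hx, hxv⟩ := hT.2.exists_consistent_eq_of_notMem_free hp v
    by_contra hmiss
    have hxX : ∀ i ∈ X, x i = v i := fun i hi =>
      hxv i fun hfree => hmiss ⟨i, hi, hfree⟩
    exact hc ((hκ x p c hp hx).symm.trans (hX x hxX))
  · intro hX x hxv
    obtain ⟨p, c, hp, hx⟩ := hT.1.exists_pathTo_consistent x
    rw [hκ x p c hp hx]
    by_contra hc
    simpa [inter_free_eq_empty_of_consistent hx hxv] using hX p c hp hc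

end DTree

theorem axp_iff_minimal_hitting_free_general {m : ℕ} {D : Fin m → Type} {K : Type}
    (T : DTree m D K) (hT : T.WellFormed) (κ : (∀ i, D i) → K)
    (hκ : ∀ (x : ∀ i, D i) (p : List (Σ i : Fin m, Set (D i))) (c : K),
      T.PathTo p c → DTree.Consistent x p → κ x = c)
    (v : ∀ i, D i) (X : Set (Fin m)) :
    AXp κ v X ↔
      ((∀ (p : List (Σ i : Fin m, Set (D i))) (c' : K),
          T.PathTo p c' → c' ≠ κ v → (X ∩ DTree.Free v p).Nonempty) ∧
       ∀ X' : Set (Fin m), X' ⊂ X →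
         ¬ (∀ (p : List (Σ i : Fin m, Set (D i))) (c' : K),
              T.PathTo p c' → c' ≠ κ v → (X' ∩ DTree.Free v p).Nonempty)) := by
  simp_rw [AXp, DTree.weakAXp_iff_hitsFree hT hκ v]
  rfl

/-- For a well-formed decision tree `T` with classifier `κ` and instance `v`
(with prediction `κ v`), a set `X` is an AXp of `κ` at `v` iff `X` is a
subset-inclusion-minimal set intersecting `Free v p` for every root-to-leaf
path `p` of `T` whose leaf class differs from `κ v`. -/
theorem axp_iff_minimal_hitting_free {m : ℕ} {D : Fin m → Type} {K : Type}
    [∀ i, Nonempty (D i)]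
    (T : DTree m D K) (hT : T.WellFormed) (κ : (∀ i, D i) → K)
    (hκ : ∀ (x : ∀ i, D i) (p : List (Σ i : Fin m, Set (D i))) (c : K),
      T.PathTo p c → DTree.Consistent x p → κ x = c)
    (v : ∀ i, D i) (X : Set (Fin m)) :
    AXp κ v X ↔
      ((∀ (p : List (Σ i : Fin m, Set (D i))) (c' : K),
          T.PathTo p c' → c' ≠ κ v → (X ∩ DTree.Free v p).Nonempty) ∧
       ∀ X' : Set (Fin m), X' ⊂ X →
         ¬ (∀ (p : List (Σ i : Fin m, Set (D i))) (c' : K),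
              T.PathTo p c' → c' ≠ κ v → (X' ∩ DTree.Free v p).Nonempty)) :=
  axp_iff_minimal_hitting_free_general T hT κ hκ v X
end

section
/- Let T be a well-formed decision tree with classifier κ_T, and let v ∈ 𝔽 with κ_T(v) = c. A feature i ∈ F belongs to some abductive explanation (AXp) of κ_T at v if and only if i belongs to some subset-inclusion-minimal element of the family { Free(P) : P a root-to-leaf path of T whose leaf class is different from c }. (This is the content of the result that AXp/CXp membership for tree explanation graphs is decidable in polynomial time.) -/
/-!
Weak AXps are exactly the hitting sets of the family of `Free` sets of the paths that end in
another class: a point that agrees with `v` on `X` reaches a leaf of another class along a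
path `P` iff `X` misses `Free v P`, since `P` is realisable off `Free v P` by well-formedness.
The theorem then becomes the hypergraph fact that the vertices covered by minimal hitting sets
are the vertices covered by minimal edges. If `X` is a minimal hitting set containing `i`,
some edge `S` meets `X` only in `i`, and so does every minimal edge below `S`. Conversely, if
`Y` is a minimal edge containing `i`, then `insert i Yᶜ` is a hitting set, and any minimal
hitting set inside it must meet `Y` in `i`.
-/

def IsHittingSet {α : Type*} (𝒮 : Set (Set α)) (X : Set α) : Prop :=
  ∀ S ∈ 𝒮, (X ∩ S).Nonempty

namespace IsHittingSet

variable {α : Type*} {𝒮 : Set (Set α)} {i : α}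

theorem exists_minimal_mem_of_minimal [Finite α] {X : Set α}
    (hX : Minimal (IsHittingSet 𝒮) X) (hi : i ∈ X) : ∃ Y, Minimal (· ∈ 𝒮) Y ∧ i ∈ Y := by
  obtain ⟨S, hS, hmiss⟩ : ∃ S ∈ 𝒮, ¬ (X \ {i} ∩ S).Nonempty := by
    simpa [IsHittingSet] using
      minimal_iff_forall_lt.1 hX |>.2 (Set.sdiff_singleton_ssubset.2 hi)
  obtain ⟨Y, hYS, hY⟩ := exists_minimal_le_of_wellFoundedLT (· ∈ 𝒮) S hS
  obtain ⟨j, hjX, hjY⟩ := hX.prop Y hY.prop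
  obtain rfl : j = i := by_contra fun hji => hmiss ⟨j, ⟨hjX, hji⟩, hYS hjY⟩
  exact ⟨Y, hY, hjY⟩

theorem insert_compl_of_minimal {Y : Set α} (hY : Minimal (· ∈ 𝒮) Y) (hi : i ∈ Y) :
    IsHittingSet 𝒮 (insert i Yᶜ) := by
  intro S hS
  by_cases hSY : S ⊆ Y
  · obtain rfl : S = Y := hY.eq_of_le hS hSY
    exact ⟨i, Set.mem_insert i _, hi⟩
  · obtain ⟨j, hjS, hjY⟩ := Set.not_subset.1 hSY
    exact ⟨j, Or.inr hjY, hjS⟩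

theorem exists_minimal_of_minimal_mem [Finite α] {Y : Set α} (hY : Minimal (· ∈ 𝒮) Y)
    (hi : i ∈ Y) :
    ∃ X, Minimal (IsHittingSet 𝒮) X ∧ i ∈ X := by
  obtain ⟨X, hXsub, hX⟩ :=
    exists_minimal_le_of_wellFoundedLT _ _ (insert_compl_of_minimal hY hi)
  obtain ⟨j, hjX, hjY⟩ := hX.prop Y hY.prop
  obtain rfl : j = i := (hXsub hjX).resolve_right (not_not.2 hjY)
  exact ⟨X, hX, hjX⟩

theorem exists_minimal_mem_iff [Finite α] :
    (∃ X, Minimal (IsHittingSet 𝒮) X ∧ i ∈ X) ↔ ∃ Y, Minimal (· ∈ 𝒮) Y ∧ i ∈ Y :=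
  ⟨fun ⟨_, hX, hi⟩ => exists_minimal_mem_of_minimal hX hi,
    fun ⟨_, hY, hi⟩ => exists_minimal_of_minimal_mem hY hi⟩

end IsHittingSet

namespace DTree

variable {m : ℕ} {D : Fin m → Type} {K : Type}

def freeSetsOfClassNe (T : DTree m D K) (v : ∀ i, D i) (c : K) : Set (Set (Fin m)) :=
  {Y | ∃ (p : List (Σ i : Fin m, Set (D i))) (c' : K), T.PathTo p c' ∧ c' ≠ c ∧ Y = Free v p}

theorem NoInconsistentPath.exists_consistent_eqOn_compl_free {T : DTree m D K}
    (hT : T.NoInconsistentPath) {p : List (Σ i : Fin m, Set (D i))} {c : K}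
    (hp : T.PathTo p c) (v : ∀ i, D i) :
    ∃ x : ∀ i, D i, Consistent x p ∧ ∀ j ∉ Free v p, x j = v j := by
  classical
  choose d hd using hT p c hp
  refine ⟨fun j => if j ∈ Free v p then d j else v j, ?_, fun j hj => if_neg hj⟩
  rintro ⟨j, E⟩ he
  by_cases hj : j ∈ Free v p
  · simpa [hj] using hd j E he
  · simpa [hj] using not_not.1 fun hvE => hj ⟨E, he, hvE⟩

theorem weakAXp_iff_isHittingSet {T : DTree m D K} (hT : T.WellFormed)
    {κ : (∀ i, D i) → K}
    (hκ : ∀ (x : ∀ i, D i) (p : List (Σ i : Fin m, Set (D i))) (c : K),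
      T.PathTo p c → Consistent x p → κ x = c)
    (v : ∀ i, D i) (X : Set (Fin m)) :
    WeakAXp κ v X ↔ IsHittingSet (T.freeSetsOfClassNe v (κ v)) X := by
  constructor
  · rintro hX _ ⟨p, c, hp, hc, rfl⟩
    by_contra hmiss
    obtain ⟨x, hxp, hxv⟩ := hT.2.exists_consistent_eqOn_compl_free hp v
    refine hc ((hκ x p c hp hxp).symm.trans (hX x fun j hj => hxv j fun hjF => ?_))
    exact hmiss ⟨j, hj, hjF⟩
  · intro hX x hxv
    obtain ⟨p, c, hp, hxp⟩ := hT.1.exists_pathTo_consistent x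
    rw [hκ x p c hp hxp]
    by_contra hc
    obtain ⟨j, hjX, E, he, hvE⟩ := hX _ ⟨p, c, hp, hc, rfl⟩
    exact hvE (hxv j hjX ▸ hxp _ he)

end DTree

theorem axp_iff_minimal {m : ℕ} {D : Fin m → Type} {K : Type} {κ : (∀ i, D i) → K}
    {v : ∀ i, D i} {X : Set (Fin m)} : AXp κ v X ↔ Minimal (WeakAXp κ v) X :=
  minimal_iff_forall_lt.symm

theorem axp_membership_iff_minimal_free_membership_general {m : ℕ} {D : Fin m → Type}
    {K : Type}
    (T : DTree m D K) (hT : T.WellFormed) (κ : (∀ i, D i) → K)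
    (hκ : ∀ (x : ∀ i, D i) (p : List (Σ i : Fin m, Set (D i))) (c : K),
      T.PathTo p c → DTree.Consistent x p → κ x = c)
    (v : ∀ i, D i) (i : Fin m) :
    (∃ X : Set (Fin m), AXp κ v X ∧ i ∈ X) ↔
    (∃ Y : Set (Fin m),
      ((∃ (p : List (Σ i : Fin m, Set (D i))) (c' : K),
          T.PathTo p c' ∧ c' ≠ κ v ∧ Y = DTree.Free v p) ∧
       ∀ Z : Set (Fin m),
         (∃ (p : List (Σ i : Fin m, Set (D i))) (c' : K),
             T.PathTo p c' ∧ c' ≠ κ v ∧ Z = DTree.Free v p) →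
         Z ⊆ Y → Z = Y) ∧
      i ∈ Y) := by
  have hweak : WeakAXp κ v = IsHittingSet (T.freeSetsOfClassNe v (κ v)) :=
    funext fun X => propext (DTree.weakAXp_iff_isHittingSet hT hκ v X)
  simp_rw [axp_iff_minimal, hweak, IsHittingSet.exists_minimal_mem_iff, minimal_iff]
  exact exists_congr fun Y => and_congr_left fun _ =>
    and_congr_right fun _ => forall₂_congr fun Z _ => imp_congr_right fun _ => eq_comm

/-- For a well-formed decision tree `T` with classifier `κ` and instance `v`
(with prediction `κ v`), a feature `i` belongs to some AXp of `κ` at `v` iff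
`i` belongs to some subset-inclusion-minimal element of the family of all
`Free v p`, for `p` a root-to-leaf path of `T` whose leaf class differs from
`κ v`. -/
theorem axp_membership_iff_minimal_free_membership {m : ℕ} {D : Fin m → Type}
    {K : Type} [∀ i, Nonempty (D i)]
    (T : DTree m D K) (hT : T.WellFormed) (κ : (∀ i, D i) → K)
    (hκ : ∀ (x : ∀ i, D i) (p : List (Σ i : Fin m, Set (D i))) (c : K),
      T.PathTo p c → DTree.Consistent x p → κ x = c)
    (v : ∀ i, D i) (i : Fin m) :
    (∃ X : Set (Fin m), AXp κ v X ∧ i ∈ X) ↔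
    (∃ Y : Set (Fin m),
      ((∃ (p : List (Σ i : Fin m, Set (D i))) (c' : K),
          T.PathTo p c' ∧ c' ≠ κ v ∧ Y = DTree.Free v p) ∧
       ∀ Z : Set (Fin m),
         (∃ (p : List (Σ i : Fin m, Set (D i))) (c' : K),
             T.PathTo p c' ∧ c' ≠ κ v ∧ Z = DTree.Free v p) →
         Z ⊆ Y → Z = Y) ∧
      i ∈ Y) :=
  axp_membership_iff_minimal_free_membership_general T hT κ hκ v i
end
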